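/- arXiv:2402.09164 — 3 statements merged into one kernel-verified Lean document; each statement's English description precedes it below -/
import Mathlib

section
/- Let F : 2^V → ℝ be a monotone non-decreasing submodular function with F(∅) = 0, and let k ≥ 1. Let S_greedy be the set produced by the greedy algorithm that, for i = 1 to k, adds the element maximizing the marginal gain. Then F(S_greedy) ≥ (1 − 1/e) · max{F(S) : S ⊆ V, |S| ≤ k}. -/
/-!
Let `T` be any set of at most `k` elements. By submodularity, adding `T` to the current greedy set
`A` gains at most the sum of the single-element gains over `T \ A`, and each of those is at most
the greedy gain; by monotonicity the gap `F T - F A` is therefore at most `k` times the greedy gain.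
So each greedy step shrinks the gap by a factor `1 - 1/k`, and after `k` steps the gap is at most
`(1 - 1/k)^k F T ≤ e⁻¹ F T`.
-/

open Finset

section Submodular

variable {V : Type*} [DecidableEq V] {F : Finset V → ℝ}

theorem sub_le_sum_marginal_of_submodular
    (hsub : ∀ Sa Sb : Finset V, Sa ⊆ Sb → ∀ α ∉ Sb,
      F (insert α Sa) - F Sa ≥ F (insert α Sb) - F Sb)
    (A D : Finset V) :
    F (A ∪ D) - F A ≤ ∑ α ∈ D \ A, (F (insert α A) - F A) := by
  induction D using Finset.induction_on with
  | empty => simp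
  | @insert x D hxD ih =>
    rw [union_insert]
    by_cases hxA : x ∈ A
    · rw [insert_eq_of_mem (mem_union_left D hxA), insert_sdiff_of_mem D hxA]
      exact ih
    · have hx : x ∉ A ∪ D := by simp [hxA, hxD]
      rw [insert_sdiff_of_notMem D hxA, sum_insert (by simp [hxD])]
      linarith [hsub A (A ∪ D) subset_union_left x hx]

theorem sub_le_mul_greedy_gain
    (hsub : ∀ Sa Sb : Finset V, Sa ⊆ Sb → ∀ α ∉ Sb,
      F (insert α Sa) - F Sa ≥ F (insert α Sb) - F Sb)
    (hmono : ∀ S T : Finset V, S ⊆ T → F S ≤ F T)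
    {A T : Finset V} {α : V} {n : ℕ} (hT : #T ≤ n)
    (hmax : ∀ β ∉ A, F (insert β A) ≤ F (insert α A)) :
    F T - F A ≤ n * (F (insert α A) - F A) := by
  have hgain : 0 ≤ F (insert α A) - F A := sub_nonneg.mpr (hmono _ _ (subset_insert α A))
  have hcard : (#(T \ A) : ℝ) ≤ n := by exact_mod_cast (card_le_card sdiff_subset).trans hT
  calc F T - F A ≤ F (A ∪ T) - F A := by linarith [hmono T (A ∪ T) subset_union_right]
    _ ≤ ∑ β ∈ T \ A, (F (insert β A) - F A) := sub_le_sum_marginal_of_submodular hsub A T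
    _ ≤ #(T \ A) * (F (insert α A) - F A) := by
      simpa using sum_le_card_nsmul (T \ A) _ _ fun β hβ ↦
        sub_le_sub_right (hmax β (mem_sdiff.mp hβ).2) (F A)
    _ ≤ n * (F (insert α A) - F A) := mul_le_mul_of_nonneg_right hcard hgain

theorem sub_greedy_step_le
    (hsub : ∀ Sa Sb : Finset V, Sa ⊆ Sb → ∀ α ∉ Sb,
      F (insert α Sa) - F Sa ≥ F (insert α Sb) - F Sb)
    (hmono : ∀ S T : Finset V, S ⊆ T → F S ≤ F T)
    {A T : Finset V} {α : V} {n : ℕ} (hn : 0 < n) (hT : #T ≤ n)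
    (hmax : ∀ β ∉ A, F (insert β A) ≤ F (insert α A)) :
    F T - F (insert α A) ≤ (1 - 1 / n) * (F T - F A) := by
  have hn' : (0 : ℝ) < n := by exact_mod_cast hn
  have h := sub_le_mul_greedy_gain hsub hmono hT hmax
  have hgain : (F T - F A) / n ≤ F (insert α A) - F A := (div_le_iff₀ hn').mpr (by linarith)
  calc F T - F (insert α A) = (F T - F A) - (F (insert α A) - F A) := by ring
    _ ≤ (F T - F A) - (F T - F A) / n := by linarith
    _ = (1 - 1 / n) * (F T - F A) := by ring

end Submodular

theorem greedy_submodular_one_sub_inv_e_general {V : Type*} [DecidableEq V]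
    (F : Finset V → ℝ)
    (hsub : ∀ Sa Sb : Finset V, Sa ⊆ Sb → ∀ α ∉ Sb,
      F (insert α Sa) - F Sa ≥ F (insert α Sb) - F Sb)
    (hmono : ∀ S T : Finset V, S ⊆ T → F S ≤ F T)
    (hempty : F ∅ = 0)
    (k : ℕ)
    (S : ℕ → Finset V) (hS0 : S 0 = ∅)
    (hgreedy : ∀ i < k, ∃ α ∉ S i, S (i + 1) = insert α (S i) ∧
      ∀ β ∉ S i, F (insert β (S i)) ≤ F (insert α (S i))) :
    ∀ T : Finset V, T.card ≤ k →
      F (S k) ≥ (1 - (Real.exp 1)⁻¹) * F T := by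
  intro T hT
  rcases Nat.eq_zero_or_pos k with rfl | hk
  · simp [card_eq_zero.mp (Nat.le_zero.mp hT), hS0, hempty]
  have hFT : 0 ≤ F T := hempty ▸ hmono ∅ T (empty_subset T)
  have hcontract : 0 ≤ 1 - 1 / (k : ℝ) :=
    sub_nonneg.mpr (div_le_one_of_le₀ (by exact_mod_cast hk) k.cast_nonneg)
  have hgap : F T - F (S k) ≤ (1 - 1 / (k : ℝ)) ^ k * (F T - F (S 0)) :=
    le_geom (u := fun i ↦ F T - F (S i)) hcontract k fun i hi ↦ by
      obtain ⟨α, -, hstep, hmax⟩ := hgreedy i hi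
      simpa only [hstep] using sub_greedy_step_le hsub hmono hk hT hmax
  have hexp : (1 - 1 / (k : ℝ)) ^ k ≤ (Real.exp 1)⁻¹ := by
    simpa [Real.exp_neg] using Real.one_sub_div_pow_le_exp_neg (n := k) (t := 1)
      (by exact_mod_cast hk)
  rw [hS0, hempty, sub_zero] at hgap
  linarith [mul_le_mul_of_nonneg_right hexp hFT]

/-- Nemhauser–Wolsey–Fisher: the greedy algorithm for maximizing a monotone
non-decreasing submodular function `F` with `F ∅ = 0` under a cardinality
constraint `k` achieves at least a `(1 - 1/e)` fraction of the optimum. -/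
theorem greedy_submodular_one_sub_inv_e {V : Type*} [DecidableEq V]
    (F : Finset V → ℝ)
    (hsub : ∀ Sa Sb : Finset V, Sa ⊆ Sb → ∀ α ∉ Sb,
      F (insert α Sa) - F Sa ≥ F (insert α Sb) - F Sb)
    (hmono : ∀ S T : Finset V, S ⊆ T → F S ≤ F T)
    (hempty : F ∅ = 0)
    (k : ℕ) (hk : 1 ≤ k)
    (S : ℕ → Finset V) (hS0 : S 0 = ∅)
    (hgreedy : ∀ i < k, ∃ α ∉ S i, S (i + 1) = insert α (S i) ∧
      ∀ β ∉ S i, F (insert β (S i)) ≤ F (insert α (S i))) :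
    ∀ T : Finset V, T.card ≤ k →
      F (S k) ≥ (1 - (Real.exp 1)⁻¹) * F T :=
  greedy_submodular_one_sub_inv_e_general F hsub hmono hempty k S hS0 hgreedy
end

section
/- For the greedy algorithm maximizing a monotone submodular F with F(∅) = 0 under cardinality constraint k, after i steps the greedy solution Sᵢ satisfies F(S*) − F(Sᵢ) ≤ (1 − 1/k)ⁱ · F(S*), where S* is an optimal set of size at most k. -/
/-!
Let `x = F S* - F Sᵢ` be the current gap and `g` the greedy gain of step `i + 1`. Submodularity
bounds `F (Sᵢ ∪ S*) - F Sᵢ` by the sum of the marginal gains of the at most `k` elements of `S*`,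
each of which is at most `g`; with monotonicity this gives `x ≤ k g`, so the next gap `x - g` is at
most `(1 - 1/k) x`. Iterating from `S₀ = ∅` gives the bound.
-/

open Finset

section

variable {V : Type*} [DecidableEq V]

def marginalGain (F : Finset V → ℝ) (S : Finset V) (a : V) : ℝ :=
  F (insert a S) - F S

def HasDiminishingReturns (F : Finset V → ℝ) : Prop :=
  ∀ Sa Sb : Finset V, Sa ⊆ Sb → ∀ α ∉ Sb,
    F (insert α Sa) - F Sa ≥ F (insert α Sb) - F Sb

namespace HasDiminishingReturns

variable {F : Finset V → ℝ}

theorem sub_le_sum_marginalGain (hF : HasDiminishingReturns F) (A B : Finset V) :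
    F (B ∪ A) - F B ≤ ∑ a ∈ A, marginalGain F B a := by
  induction A using Finset.induction_on with
  | empty => simp
  | @insert a A ha ih =>
    rw [sum_insert ha, union_insert]
    by_cases hmem : a ∈ B ∪ A
    · have haB : a ∈ B := by simpa [ha] using hmem
      simpa [marginalGain, insert_eq_of_mem hmem, insert_eq_of_mem haB] using ih
    · have := hF B (B ∪ A) subset_union_left a hmem
      simp only [marginalGain] at ih ⊢
      linarith

theorem sub_le_card_mul (hF : HasDiminishingReturns F) (hmono : Monotone F)
    {T B : Finset V} {g : ℝ} (hg : ∀ a ∈ T, marginalGain F B a ≤ g) :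
    F T - F B ≤ #T * g :=
  calc F T - F B ≤ F (B ∪ T) - F B := by
        linarith [hmono (subset_union_right : T ⊆ B ∪ T)]
    _ ≤ ∑ a ∈ T, marginalGain F B a := hF.sub_le_sum_marginalGain T B
    _ ≤ ∑ _a ∈ T, g := sum_le_sum hg
    _ = #T * g := by rw [sum_const, nsmul_eq_mul]

end HasDiminishingReturns

theorem sub_le_one_sub_one_div_mul {k : ℕ} {x g : ℝ} (hg : 0 ≤ g) (hx : x ≤ k * g) :
    x - g ≤ (1 - 1 / (k : ℝ)) * x := by
  rcases Nat.eq_zero_or_pos k with rfl | hk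
  · simpa using hg
  · have hk' : (0 : ℝ) < k := Nat.cast_pos.mpr hk
    have : x / k ≤ g := by rwa [div_le_iff₀ hk', mul_comm]
    rw [sub_mul, one_mul, one_div_mul_eq_div]
    linarith

theorem one_sub_one_div_natCast_nonneg (k : ℕ) : 0 ≤ 1 - 1 / (k : ℝ) := by
  rcases Nat.eq_zero_or_pos k with rfl | hk
  · simp
  · rw [sub_nonneg, div_le_one (Nat.cast_pos.mpr hk)]
    exact Nat.one_le_cast.mpr hk

theorem HasDiminishingReturns.sub_insert_le_of_maximizes_marginalGain {F : Finset V → ℝ}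
    (hF : HasDiminishingReturns F) (hmono : Monotone F) {B T : Finset V} {α : V} {k : ℕ}
    (hα : ∀ β ∉ B, marginalGain F B β ≤ marginalGain F B α) (hT : #T ≤ k) :
    F T - F (insert α B) ≤ (1 - 1 / (k : ℝ)) * (F T - F B) := by
  have hg : 0 ≤ marginalGain F B α := sub_nonneg.mpr (hmono (subset_insert α B))
  have hgain : ∀ β ∈ T, marginalGain F B β ≤ marginalGain F B α := fun β _ => by
    by_cases hβ : β ∈ B
    · simpa [marginalGain, insert_eq_of_mem hβ] using hg
    · exact hα β hβ
  have hgap : F T - F B ≤ k * marginalGain F B α :=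
    (hF.sub_le_card_mul hmono hgain).trans
      (mul_le_mul_of_nonneg_right (Nat.cast_le.mpr hT) hg)
  simpa [marginalGain] using sub_le_one_sub_one_div_mul hg hgap

end

theorem greedy_gap_bound_general {V : Type*} [DecidableEq V]
    (F : Finset V → ℝ)
    (hsub : ∀ Sa Sb : Finset V, Sa ⊆ Sb → ∀ α ∉ Sb,
      F (insert α Sa) - F Sa ≥ F (insert α Sb) - F Sb)
    (hmono : ∀ S T : Finset V, S ⊆ T → F S ≤ F T)
    (hempty : F ∅ = 0)
    (k : ℕ)
    (S : ℕ → Finset V) (hS0 : S 0 = ∅)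
    (hgreedy : ∀ i, ∃ α ∉ S i, S (i + 1) = insert α (S i) ∧
      ∀ β ∉ S i, F (insert β (S i)) ≤ F (insert α (S i)))
    (Sstar : Finset V) (hcard : Sstar.card ≤ k) :
    ∀ i : ℕ, F Sstar - F (S i) ≤ (1 - 1 / (k : ℝ)) ^ i * F Sstar := by
  have hstep : ∀ i, F Sstar - F (S (i + 1)) ≤ (1 - 1 / (k : ℝ)) * (F Sstar - F (S i)) := by
    intro i
    obtain ⟨α, -, hSi, hα⟩ := hgreedy i
    rw [hSi]
    exact HasDiminishingReturns.sub_insert_le_of_maximizes_marginalGain hsub hmono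
      (fun β hβ => sub_le_sub_right (hα β hβ) _) hcard
  intro i
  simpa [hS0, hempty] using
    le_geom (u := fun i => F Sstar - F (S i)) (one_sub_one_div_natCast_nonneg k) i
      (fun j _ => hstep j)

/-- Greedy analysis: after `i` steps the greedy solution `S i` satisfies
`F S* - F (S i) ≤ (1 - 1/k)^i * F S*`. -/
theorem greedy_gap_bound {V : Type*} [DecidableEq V]
    (F : Finset V → ℝ)
    (hsub : ∀ Sa Sb : Finset V, Sa ⊆ Sb → ∀ α ∉ Sb,
      F (insert α Sa) - F Sa ≥ F (insert α Sb) - F Sb)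
    (hmono : ∀ S T : Finset V, S ⊆ T → F S ≤ F T)
    (hempty : F ∅ = 0)
    (k : ℕ) (hk : 1 ≤ k)
    (S : ℕ → Finset V) (hS0 : S 0 = ∅)
    (hgreedy : ∀ i, ∃ α ∉ S i, S (i + 1) = insert α (S i) ∧
      ∀ β ∉ S i, F (insert β (S i)) ≤ F (insert α (S i)))
    (Sstar : Finset V) (hcard : Sstar.card ≤ k)
    (hopt : ∀ T : Finset V, T.card ≤ k → F T ≤ F Sstar) :
    ∀ i : ℕ, F Sstar - F (S i) ≤ (1 - 1 / (k : ℝ)) ^ i * F Sstar :=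
  greedy_gap_bound_general F hsub hmono hempty k S hS0 hgreedy Sstar hcard
end

section
/- Key inequality in the greedy analysis: if F is monotone submodular, S is any set, and S* is a set with |S*| ≤ k, then there exists α ∈ S* \ S such that F(S ∪ {α}) − F(S) ≥ (F(S*) − F(S)) / k. -/
/-! Adding the elements of `S* \ S` to `S` one at a time and bounding each increment by
diminishing returns gives `F S* - F S ≤ F (S ∪ S*) - F S ≤ ∑_{a ∈ S* \ S} (F (S ∪ {a}) - F S)`.
This is a sum of at most `k` nonnegative terms, so one of them is at least `(F S* - F S) / k`. -/

open Finset

theorem Finset.exists_div_le_of_le_sum {ι : Type*} {A : Finset ι} (hA : A.Nonempty)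
    {g : ι → ℝ} (hg : ∀ a ∈ A, 0 ≤ g a) {c k : ℝ} (hk : (#A : ℝ) ≤ k)
    (hc : c ≤ ∑ a ∈ A, g a) : ∃ a ∈ A, c / k ≤ g a := by
  have hk_pos : 0 < k := lt_of_lt_of_le (by exact_mod_cast hA.card_pos) hk
  by_cases hc_nonpos : c ≤ 0
  · obtain ⟨a, ha⟩ := hA
    exact ⟨a, ha, (div_nonpos_of_nonpos_of_nonneg hc_nonpos hk_pos.le).trans (hg a ha)⟩
  · refine exists_le_of_sum_le hA ?_
    calc ∑ _ ∈ A, c / k = #A * (c / k) := by rw [sum_const, nsmul_eq_mul]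
      _ ≤ k * (c / k) := by gcongr; exact div_nonneg (by linarith) hk_pos.le
      _ = c := mul_div_cancel₀ c hk_pos.ne'
      _ ≤ ∑ a ∈ A, g a := hc

theorem union_sub_le_sum_insert_sub {V : Type*} [DecidableEq V] (F : Finset V → ℝ)
    (hsub : ∀ Sa Sb : Finset V, Sa ⊆ Sb → ∀ α ∉ Sb,
      F (insert α Sa) - F Sa ≥ F (insert α Sb) - F Sb)
    (S T : Finset V) : F (S ∪ T) - F S ≤ ∑ a ∈ T \ S, (F (insert a S) - F S) := by
  induction T using Finset.induction_on with
  | empty => simp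
  | @insert a T haT ih =>
    rw [union_insert]
    by_cases haS : a ∈ S
    · rwa [insert_eq_of_mem (mem_union_left T haS), insert_sdiff_of_mem T haS]
    · have ha_union : a ∉ S ∪ T := by simp [haS, haT]
      have ha_sdiff : a ∉ T \ S := fun h => haT (mem_sdiff.1 h).1
      rw [insert_sdiff_of_notMem T haS, sum_insert ha_sdiff]
      linarith [hsub S (S ∪ T) subset_union_left a ha_union]

theorem exists_good_marginal_gain_general {V : Type*} [DecidableEq V]
    (F : Finset V → ℝ)
    (hsub : ∀ Sa Sb : Finset V, Sa ⊆ Sb → ∀ α ∉ Sb,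
      F (insert α Sa) - F Sa ≥ F (insert α Sb) - F Sb)
    (hmono : ∀ S T : Finset V, S ⊆ T → F S ≤ F T)
    (k : ℕ)
    (S Sstar : Finset V) (hcard : Sstar.card ≤ k)
    (hne : (Sstar \ S).Nonempty) :
    ∃ α ∈ Sstar \ S, F (insert α S) - F S ≥ (F Sstar - F S) / (k : ℝ) := by
  have hgain_nonneg : ∀ a ∈ Sstar \ S, 0 ≤ F (insert a S) - F S := fun a _ =>
    sub_nonneg.2 (hmono _ _ (subset_insert a S))
  have hcard_sdiff : (#(Sstar \ S) : ℝ) ≤ k := by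
    exact_mod_cast (card_le_card sdiff_subset).trans hcard
  have hsum : F Sstar - F S ≤ ∑ a ∈ Sstar \ S, (F (insert a S) - F S) := by
    linarith [union_sub_le_sum_insert_sub F hsub S Sstar,
      hmono Sstar (S ∪ Sstar) subset_union_right]
  exact exists_div_le_of_le_sum hne hgain_nonneg hcard_sdiff hsum

/-- Key inequality in the greedy analysis: there is an element of `S* \ S`
whose marginal gain is at least `(F S* - F S) / k`. -/
theorem exists_good_marginal_gain {V : Type*} [DecidableEq V]
    (F : Finset V → ℝ)
    (hsub : ∀ Sa Sb : Finset V, Sa ⊆ Sb → ∀ α ∉ Sb,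
      F (insert α Sa) - F Sa ≥ F (insert α Sb) - F Sb)
    (hmono : ∀ S T : Finset V, S ⊆ T → F S ≤ F T)
    (k : ℕ) (hk : 1 ≤ k)
    (S Sstar : Finset V) (hcard : Sstar.card ≤ k)
    (hne : (Sstar \ S).Nonempty) :
    ∃ α ∈ Sstar \ S, F (insert α S) - F S ≥ (F Sstar - F S) / (k : ℝ) :=
  exists_good_marginal_gain_general F hsub hmono k S Sstar hcard hne
end
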